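/- Naming inverts name elimination: for every well-formed λ_int term t with fv(t) ⊆ ȳ ∪ x̄ (disjoint), the naming translation applied to the name elimination of t yields back t up to α-equivalence: 𝒩(𝒞(t)_{ȳ,x̄})_{ȳ,x̄} =_α t. -/

import Mathlib

set_option linter.unusedVariables false

namespace CC

/-- Terms of the source calculus λ_sou (de Bruijn indices, multi-binders). -/
inductive STm : Type
| var : Nat → STm
| lam : Nat → STm → STm
| app : STm → STm → STm
| proj : Nat → STm → STm
| tup : List STm → STm

instance : Inhabited STm := ⟨.var 0⟩

namespace STm

/-- Size of a source term. -/
def size : STm → Nat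
| var _ => 1
| lam n t => t.size + n + 1
| app t u => t.size + u.size + 1
| proj _ t => t.size + 1
| tup ts => ts.length + (ts.attach.map (fun ⟨a, ha⟩ => a.size)).sum
decreasing_by all_goals first
  | (have := List.sizeOf_lt_of_mem ha; omega)
  | decreasing_tactic

/-- Renaming of free de Bruijn indices. -/
def rename (ρ : Nat → Nat) : STm → STm
| var i => var (ρ i)
| lam n t => lam n (t.rename (fun i => if i < n then i else ρ (i - n) + n))
| app t u => app (t.rename ρ) (u.rename ρ)
| proj i t => proj i (t.rename ρ)
| tup ts => tup (ts.attach.map (fun ⟨a, ha⟩ => a.rename ρ))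
decreasing_by all_goals first
  | (have := List.sizeOf_lt_of_mem ha; omega)
  | decreasing_tactic

/-- Parallel substitution. -/
def subst (σ : Nat → STm) : STm → STm
| var i => σ i
| lam n t => lam n (t.subst (fun i => if i < n then var i else (σ (i - n)).rename (· + n)))
| app t u => app (t.subst σ) (u.subst σ)
| proj i t => proj i (t.subst σ)
| tup ts => tup (ts.attach.map (fun ⟨a, ha⟩ => a.subst σ))
decreasing_by all_goals first
  | (have := List.sizeOf_lt_of_mem ha; omega)
  | decreasing_tactic

/-- Simultaneous substitution of a list of terms for indices `0..vs.length-1`. -/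
def substList (vs : List STm) (t : STm) : STm :=
  t.subst (fun i => if i < vs.length then vs.getD i default else var (i - vs.length))

end STm

/-- Values of λ_sou: (multi-variable) abstractions and tuples of values. -/
inductive SVal : STm → Prop
| lam {n t} : SVal (.lam n t)
| tup {vs} : (∀ v ∈ vs, SVal v) → SVal (.tup vs)

/-- All free de Bruijn indices of `t` are `< k`. `FB 0 t` means `t` is closed. -/
inductive SFB : Nat → STm → Prop
| var {k i} : i < k → SFB k (.var i)
| lam {k n t} : SFB (k + n) t → SFB k (.lam n t)
| app {k t u} : SFB k t → SFB k u → SFB k (.app t u)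
| proj {k i t} : SFB k t → SFB k (.proj i t)
| tup {k ts} : (∀ t ∈ ts, SFB k t) → SFB k (.tup ts)

/-- Labels for the two rewrite rules. -/
inductive Lab | beta | pi
deriving DecidableEq

/-- Labelled weak right-to-left call-by-value reduction of λ_sou,
root rules closed under evaluation contexts. -/
inductive SStepL : Lab → STm → STm → Prop
| beta {n t vs} : (∀ v ∈ vs, SVal v) → vs.length = n →
    SStepL .beta (.app (.lam n t) (.tup vs)) (STm.substList vs t)
| proj {i vs} : (∀ v ∈ vs, SVal v) → i < vs.length →
    SStepL .pi (.proj i (.tup vs)) (vs.getD i default)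
| appR {l t u u'} : SStepL l u u' → SStepL l (.app t u) (.app t u')
| appL {l v t t'} : SVal v → SStepL l t t' → SStepL l (.app t v) (.app t' v)
| projC {l i t t'} : SStepL l t t' → SStepL l (.proj i t) (.proj i t')
| tupC {l ts t t' vs} : (∀ v ∈ vs, SVal v) → SStepL l t t' →
    SStepL l (.tup (ts ++ t :: vs)) (.tup (ts ++ t' :: vs))

/-- The reduction →_sou. -/
def SStep (t u : STm) : Prop := ∃ l, SStepL l t u

/-- Clashes of λ_sou: root clashes closed under evaluation contexts. -/
inductive SClash : STm → Prop
| rproj {i v} : SVal v → (∀ vs, v = .tup vs → vs.length ≤ i) → SClash (.proj i v)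
| rapp {n t v} : SVal v → (∀ vs, v = .tup vs → vs.length ≠ n) → SClash (.app (.lam n t) v)
| rtup {rs s} : SClash (.app (.tup rs) s)
| cAppR {t u} : SClash u → SClash (.app t u)
| cAppL {t v} : SVal v → SClash t → SClash (.app t v)
| cProj {i t} : SClash t → SClash (.proj i t)
| cTup {ts t vs} : (∀ v ∈ vs, SVal v) → SClash t → SClash (.tup (ts ++ t :: vs))

/-- Clash-freeness (coinductively: no reduct is a clash). -/
def SClashFree (t : STm) : Prop := ∀ u, Relation.ReflTransGen SStep t u → ¬ SClash u

/-- `k`-fold iteration of a reduction. -/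
def iterRel {α : Type _} (R : α → α → Prop) : Nat → α → α → Prop
| 0, t, u => t = u
| (k+1), t, u => ∃ s, R t s ∧ iterRel R k s u

end CC

namespace CC

/-- Terms of the intermediate calculus λ_int: abstractions are replaced by
closures `clo n m body bag` binding `n` wrapped variables ȳ (indices `m..m+n-1`
of the body) and `m` source variables x̄ (indices `0..m-1` of the body),
with a bag of `n` terms. -/
inductive ITm : Type
| var : Nat → ITm
| app : ITm → ITm → ITm
| proj : Nat → ITm → ITm
| tup : List ITm → ITm
| clo : Nat → Nat → ITm → List ITm → ITm

instance : Inhabited ITm := ⟨.var 0⟩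

namespace ITm

/-- Renaming of free variables of a λ_int term: closure bodies are untouched
(there are no free variables in the body other than the closure's own binders). -/
def irename (ρ : Nat → Nat) : ITm → ITm
| var i => var (ρ i)
| app t u => app (t.irename ρ) (u.irename ρ)
| proj i t => proj i (t.irename ρ)
| tup ts => tup (ts.attach.map (fun ⟨a, ha⟩ => a.irename ρ))
| clo n m body bag => clo n m body (bag.attach.map (fun ⟨a, ha⟩ => a.irename ρ))
decreasing_by all_goals first
  | (have := List.sizeOf_lt_of_mem ha; omega)
  | decreasing_tactic

/-- Simultaneous substitution of the terms `vs` for the free variables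
`0..vs.length-1` of a λ_int term (shifting the remaining ones down);
it goes into bags but leaves closure bodies untouched. -/
def isubst (vs : List ITm) : ITm → ITm
| var i => if i < vs.length then vs.getD i default else var (i - vs.length)
| app t u => app (t.isubst vs) (u.isubst vs)
| proj i t => proj i (t.isubst vs)
| tup ts => tup (ts.attach.map (fun ⟨a, ha⟩ => a.isubst vs))
| clo n m body bag => clo n m body (bag.attach.map (fun ⟨a, ha⟩ => a.isubst vs))
decreasing_by all_goals first
  | (have := List.sizeOf_lt_of_mem ha; omega)
  | decreasing_tactic

/-- Size of a λ_int term (counting bags and binder sequences). -/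
def isize : ITm → Nat
| var _ => 1
| app t u => t.isize + u.isize + 1
| proj _ t => t.isize + 1
| tup ts => ts.length + (ts.attach.map (fun ⟨a, ha⟩ => a.isize)).sum
| clo n m body bag =>
    body.isize + n + m + 1 + bag.length + (bag.attach.map (fun ⟨a, ha⟩ => a.isize)).sum
decreasing_by all_goals first
  | (have := List.sizeOf_lt_of_mem ha; omega)
  | decreasing_tactic

end ITm

/-- Values of λ_int: closures (with a variable bag or with an evaluated bag)
and tuples of values. -/
inductive IVal : ITm → Prop
| cloV {n m t bag} : (∀ b ∈ bag, ∃ i, b = ITm.var i) → IVal (.clo n m t bag)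
| cloE {n m t bag} : (∀ b ∈ bag, IVal b) → IVal (.clo n m t bag)
| tup {vs} : (∀ v ∈ vs, IVal v) → IVal (.tup vs)

/-- All free variables of a λ_int term are `< k` (`IFB 0 t`: `t` is closed). -/
inductive IFB : Nat → ITm → Prop
| var {k i} : i < k → IFB k (.var i)
| app {k t u} : IFB k t → IFB k u → IFB k (.app t u)
| proj {k i t} : IFB k t → IFB k (.proj i t)
| tup {k ts} : (∀ t ∈ ts, IFB k t) → IFB k (.tup ts)
| clo {k n m body bag} : (∀ b ∈ bag, IFB k b) → IFB (n + m + k) body →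
    IFB k (.clo n m body bag)

/-- Well-formed λ_int terms: every closure `clo n m body bag` satisfies
`|bag| = n`, its body is closed by the binders (fv(body) ⊆ ȳ ∪ x̄), and the bag
is either a bag of variables or a bag of values. -/
inductive IWF : ITm → Prop
| var {i} : IWF (.var i)
| app {t u} : IWF t → IWF u → IWF (.app t u)
| proj {i t} : IWF t → IWF (.proj i t)
| tup {ts} : (∀ t ∈ ts, IWF t) → IWF (.tup ts)
| cloV {n m body bag} : bag.length = n → IFB (n + m) body →
    (∀ b ∈ bag, ∃ i, b = ITm.var i) → IWF body → IWF (.clo n m body bag)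
| cloE {n m body bag} : bag.length = n → IFB (n + m) body →
    (∀ b ∈ bag, IVal b) → (∀ b ∈ bag, IWF b) → IWF body → IWF (.clo n m body bag)

/-- Prime λ_int terms: all closures are variable closures. -/
inductive IPrime : ITm → Prop
| var {i} : IPrime (.var i)
| app {t u} : IPrime t → IPrime u → IPrime (.app t u)
| proj {i t} : IPrime t → IPrime (.proj i t)
| tup {ts} : (∀ t ∈ ts, IPrime t) → IPrime (.tup ts)
| clo {n m body bag} : (∀ b ∈ bag, ∃ i, b = ITm.var i) → IPrime body →
    IPrime (.clo n m body bag)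

/-- Labelled reduction of λ_int: the root rules `iβv` (the closure's bag is
substituted for ȳ and the argument tuple for x̄, simultaneously) and `iπ`,
closed under evaluation contexts (which do not enter closures). -/
inductive IStepL : Lab → ITm → ITm → Prop
| beta {n m body bag vs} : (∀ b ∈ bag, IVal b) → (∀ v ∈ vs, IVal v) →
    bag.length = n → vs.length = m →
    IStepL .beta (.app (.clo n m body bag) (.tup vs)) (ITm.isubst (vs ++ bag) body)
| proj {i vs} : (∀ v ∈ vs, IVal v) → i < vs.length →
    IStepL .pi (.proj i (.tup vs)) (vs.getD i default)
| appR {l t u u'} : IStepL l u u' → IStepL l (.app t u) (.app t u')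
| appL {l v t t'} : IVal v → IStepL l t t' → IStepL l (.app t v) (.app t' v)
| projC {l i t t'} : IStepL l t t' → IStepL l (.proj i t) (.proj i t')
| tupC {l ts t t' vs} : (∀ v ∈ vs, IVal v) → IStepL l t t' →
    IStepL l (.tup (ts ++ t :: vs)) (.tup (ts ++ t' :: vs))

/-- The reduction →_int. -/
def IStep (t u : ITm) : Prop := ∃ l, IStepL l t u

/-- Clashes of λ_int: root clashes closed under evaluation contexts. -/
inductive IClash : ITm → Prop
| rproj {i v} : IVal v → (∀ vs, v = .tup vs → vs.length ≤ i) → IClash (.proj i v)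
| rapp {n m body bag v} : IVal v → (∀ vs, v = .tup vs → vs.length ≠ m) →
    IClash (.app (.clo n m body bag) v)
| rtup {rs s} : IClash (.app (.tup rs) s)
| cAppR {t u} : IClash u → IClash (.app t u)
| cAppL {t v} : IVal v → IClash t → IClash (.app t v)
| cProj {i t} : IClash t → IClash (.proj i t)
| cTup {ts t vs} : (∀ v ∈ vs, IVal v) → IClash t → IClash (.tup (ts ++ t :: vs))

/-- Clash-freeness for λ_int. -/
def IClashFree (t : ITm) : Prop := ∀ u, Relation.ReflTransGen IStep t u → ¬ IClash u

/-- The wrapping translation ⌈·⌉ : λ_sou → λ_int: every abstraction `λx̄.t` with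
free variables ȳ becomes the variable closure `[λȳ.λx̄.⌈t⌉, ⟨ȳ⟩]`; homomorphic
on the other constructors. -/
def STm.fvs : STm → Finset Nat
| .var i => {i}
| .lam n t => (t.fvs.filter (· ≥ n)).image (· - n)
| .app t u => t.fvs ∪ u.fvs
| .proj _ t => t.fvs
| .tup ts => ts.attach.foldr (fun ⟨a, ha⟩ acc => a.fvs ∪ acc) ∅
decreasing_by all_goals first
  | (have := List.sizeOf_lt_of_mem ha; omega)
  | decreasing_tactic

def STm.wrap : STm → ITm
| .var i => .var i
| .app t u => .app t.wrap u.wrap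
| .proj i t => .proj i t.wrap
| .tup ts => .tup (ts.attach.map (fun ⟨a, ha⟩ => a.wrap))
| .lam n t =>
    let ys : List Nat := (((t.fvs.filter (· ≥ n)).image (· - n)).sort (· ≤ ·))
    .clo ys.length n
      (t.wrap.irename (fun j => if j < n then j else n + (ys.idxOf (j - n))))
      (ys.map (fun j => ITm.var j))
decreasing_by all_goals first
  | (have := List.sizeOf_lt_of_mem ha; omega)
  | decreasing_tactic

/-- The unwrapping translation ⌊·⌋ : λ_int → λ_sou: substitutes the (unwrapped)
bag of each closure for its wrapped variables ȳ; on a variable closure with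
bag ⟨ȳ⟩ this gives `λx̄.⌊body⌋` with the ȳ free. -/
def ITm.unwrap : ITm → STm
| .var i => .var i
| .app t u => .app t.unwrap u.unwrap
| .proj i t => .proj i t.unwrap
| .tup ts => .tup (ts.attach.map (fun ⟨a, ha⟩ => a.unwrap))
| .clo n m body bag =>
    let ub : List STm := bag.attach.map (fun ⟨a, ha⟩ => a.unwrap)
    .lam m (body.unwrap.subst (fun i =>
      if i < m then .var i
      else if i < m + n then (ub.getD (i - m) default).rename (· + m)
      else .var (i - n)))
decreasing_by all_goals first
  | (have := List.sizeOf_lt_of_mem ha; omega)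
  | decreasing_tactic

end CC

namespace CC

/-- Terms of the target calculus λ_tar: projected variables `πᵢ l` (`pl i`) and
`πᵢ s` (`ps i`), applications, projections, tuples, and annotated closures
`[t, b]^{n,m}`. -/
inductive TTm : Type
| pl : Nat → TTm
| ps : Nat → TTm
| app : TTm → TTm → TTm
| proj : Nat → TTm → TTm
| tup : List TTm → TTm
| clo : Nat → Nat → TTm → List TTm → TTm

instance : Inhabited TTm := ⟨.tup []⟩

namespace TTm

/-- Projecting substitution `t{l := v̄₁, s := v̄₂}`: replaces `πᵢ l` by the i-th
component of `v1` and `πⱼ s` by the j-th component of `v2` (projections performed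
on the fly); it substitutes into bags of closures but not into closure bodies. -/
def tsub (v1 v2 : List TTm) : TTm → TTm
| pl i => v1.getD i default
| ps i => v2.getD i default
| app t u => app (t.tsub v1 v2) (u.tsub v1 v2)
| proj i t => proj i (t.tsub v1 v2)
| tup ts => tup (ts.attach.map (fun ⟨a, ha⟩ => a.tsub v1 v2))
| clo n m body bag => clo n m body (bag.attach.map (fun ⟨a, ha⟩ => a.tsub v1 v2))
decreasing_by all_goals first
  | (have := List.sizeOf_lt_of_mem ha; omega)
  | decreasing_tactic

end TTm

/-- Values of λ_tar: closures (with a projected-variable bag or an evaluated bag)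
and tuples of values. -/
inductive TVal : TTm → Prop
| cloV {n m t bag} : (∀ b ∈ bag, (∃ i, b = TTm.pl i) ∨ (∃ i, b = TTm.ps i)) →
    TVal (.clo n m t bag)
| cloE {n m t bag} : (∀ b ∈ bag, TVal b) → TVal (.clo n m t bag)
| tup {vs} : (∀ v ∈ vs, TVal v) → TVal (.tup vs)

/-- Well-formedness of λ_tar terms relative to bounds `n` (for `πᵢ l`) and `m`
(for `πᵢ s`) on the projected variables occurring outside closure bodies;
`TWF 0 0 t` states that `t` is closed and well-formed. -/
inductive TWF : Nat → Nat → TTm → Prop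
| pl {n m i} : i < n → TWF n m (.pl i)
| ps {n m i} : i < m → TWF n m (.ps i)
| app {n m t u} : TWF n m t → TWF n m u → TWF n m (.app t u)
| proj {n m i t} : TWF n m t → TWF n m (.proj i t)
| tup {n m ts} : (∀ t ∈ ts, TWF n m t) → TWF n m (.tup ts)
| clo {n m n' m' body bag} : bag.length = n' → TWF n' m' body →
    (∀ b ∈ bag, TWF n m b) → TWF n m (.clo n' m' body bag)

/-- Labelled reduction of λ_tar: root rules `tβv` and `tπ` closed under weak
right-to-left evaluation contexts (which do not enter closures, and whose
application-left case requires the argument to be a value tuple). -/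
inductive TStepL : Lab → TTm → TTm → Prop
| beta {n m body bag vs} : (∀ b ∈ bag, TVal b) → (∀ v ∈ vs, TVal v) →
    bag.length = n → vs.length = m →
    TStepL .beta (.app (.clo n m body bag) (.tup vs)) (body.tsub bag vs)
| proj {i vs} : (∀ v ∈ vs, TVal v) → i < vs.length →
    TStepL .pi (.proj i (.tup vs)) (vs.getD i default)
| appR {l t u u'} : TStepL l u u' → TStepL l (.app t u) (.app t u')
| appL {l vs t t'} : (∀ v ∈ vs, TVal v) → TStepL l t t' →
    TStepL l (.app t (.tup vs)) (.app t' (.tup vs))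
| projC {l i t t'} : TStepL l t t' → TStepL l (.proj i t) (.proj i t')
| tupC {l ts t t' vs} : (∀ v ∈ vs, TVal v) → TStepL l t t' →
    TStepL l (.tup (ts ++ t :: vs)) (.tup (ts ++ t' :: vs))

/-- The reduction →_tar. -/
def TStep (t u : TTm) : Prop := ∃ l, TStepL l t u

/-- Clashes of λ_tar: root clashes closed under evaluation contexts. -/
inductive TClash : TTm → Prop
| rproj {i v} : TVal v → (∀ vs, v = .tup vs → vs.length ≤ i) → TClash (.proj i v)
| rapp {n m body bag v} : TVal v → (∀ vs, v = .tup vs → vs.length ≠ m) →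
    TClash (.app (.clo n m body bag) v)
| rtup {rs s} : TClash (.app (.tup rs) s)
| cAppR {t u} : TClash u → TClash (.app t u)
| cAppL {t vs} : (∀ v ∈ vs, TVal v) → TClash t → TClash (.app t (.tup vs))
| cProj {i t} : TClash t → TClash (.proj i t)
| cTup {ts t vs} : (∀ v ∈ vs, TVal v) → TClash t → TClash (.tup (ts ++ t :: vs))

/-- Clash-freeness for λ_tar. -/
def TClashFree (t : TTm) : Prop := ∀ u, Relation.ReflTransGen TStep t u → ¬ TClash u

/-- Name elimination 𝒞(·)_{ȳ,x̄} : λ_int → λ_tar, with parameters the lengths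
`n = |ȳ|` and `m = |x̄|`: the source variables x̄ are the de Bruijn indices
`0..m-1` (mapped to `πᵢ s`) and the wrapped variables ȳ are the indices
`m..m+n-1` (mapped to `πᵢ l`). -/
def ITm.elim (n m : Nat) : ITm → TTm
| .var i => if i < m then .ps i else .pl (i - m)
| .app t u => .app (t.elim n m) (u.elim n m)
| .proj i t => .proj i (t.elim n m)
| .tup ts => .tup (ts.attach.map (fun ⟨a, ha⟩ => a.elim n m))
| .clo n' m' body bag =>
    .clo n' m' (body.elim n' m') (bag.attach.map (fun ⟨a, ha⟩ => a.elim n m))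
decreasing_by all_goals first
  | (have := List.sizeOf_lt_of_mem ha; omega)
  | decreasing_tactic

/-- The naming translation 𝒩(·)_{ȳ,x̄} : λ_tar → λ_int, with parameters the
lengths `n = |ȳ|`, `m = |x̄|`: `πᵢ l` becomes the variable `m + i` (i.e. yᵢ)
and `πⱼ s` the variable `j` (i.e. xⱼ). -/
def TTm.naming (n m : Nat) : TTm → ITm
| .pl i => .var (m + i)
| .ps i => .var i
| .app t u => .app (t.naming n m) (u.naming n m)
| .proj i t => .proj i (t.naming n m)
| .tup ts => .tup (ts.attach.map (fun ⟨a, ha⟩ => a.naming n m))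
| .clo n' m' body bag =>
    .clo n' m' (body.naming n' m') (bag.attach.map (fun ⟨a, ha⟩ => a.naming n m))
decreasing_by all_goals first
  | (have := List.sizeOf_lt_of_mem ha; omega)
  | decreasing_tactic

end CC

namespace CC

theorem elim_tup' (n m : Nat) (ts : List ITm) :
    ITm.elim n m (.tup ts) = .tup (ts.map (ITm.elim n m)) := by
  rw [ITm.elim]; simp

theorem elim_clo' (n m n' m' : Nat) (body : ITm) (bag : List ITm) :
    ITm.elim n m (.clo n' m' body bag)
      = .clo n' m' (body.elim n' m') (bag.map (ITm.elim n m)) := by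
  rw [ITm.elim]; simp

theorem naming_tup' (n m : Nat) (ts : List TTm) :
    TTm.naming n m (.tup ts) = .tup (ts.map (TTm.naming n m)) := by
  rw [TTm.naming]; simp

theorem naming_clo' (n m n' m' : Nat) (body : TTm) (bag : List TTm) :
    TTm.naming n m (.clo n' m' body bag)
      = .clo n' m' (body.naming n' m') (bag.map (TTm.naming n m)) := by
  rw [TTm.naming]; simp

/-- Naming inverts name elimination: for every well-formed λ_int term `t`
with fv(t) ⊆ ȳ ∪ x̄ (|ȳ| = n, |x̄| = m), `𝒩(𝒞(t)_{ȳ,x̄})_{ȳ,x̄} = t`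
(α-equivalence is equality with de Bruijn representation). -/
theorem naming_elim (n m : Nat) (t : ITm) (hwf : IWF t) (hfb : IFB (n + m) t) :
    TTm.naming n m (t.elim n m) = t := by
  revert hwf hfb
  induction n, m, t using ITm.elim.induct with
  | case1 n m i h =>
    intro _ _
    simp [ITm.elim, TTm.naming, h]
  | case2 n m i h =>
    intro _ hfb
    cases hfb with
    | var hi =>
      have : m + (i - m) = i := by omega
      simp [ITm.elim, TTm.naming, h, this]
  | case3 n m t u ih1 ih2 =>
    intro hwf hfb
    cases hwf with
    | app hw1 hw2 =>
      cases hfb with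
      | app hf1 hf2 =>
        simp [ITm.elim, TTm.naming, ih1 hw1 hf1, ih2 hw2 hf2]
  | case4 n m i t ih =>
    intro hwf hfb
    cases hwf with
    | proj hw =>
      cases hfb with
      | proj hf =>
        simp [ITm.elim, TTm.naming, ih hw hf]
  | case5 n m ts ih =>
    intro hwf hfb
    cases hwf with
    | tup hw =>
      cases hfb with
      | tup hf =>
        rw [elim_tup', naming_tup', List.map_map]
        congr 1
        calc ts.map (TTm.naming n m ∘ ITm.elim n m)
            = ts.map id := List.map_congr_left (fun a ha => ih a ha (hw a ha) (hf a ha))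
          _ = ts := List.map_id ts
  | case6 n m n' m' body bag ih1 ih2 =>
    intro hwf hfb
    have hbagfb : ∀ b ∈ bag, IFB (n + m) b := by
      cases hfb with | clo h1 h2 => exact h1
    have hbody : TTm.naming n' m' (ITm.elim n' m' body) = body := by
      cases hwf with
      | cloV _ hfbody _ hwbody => exact ih1 hwbody hfbody
      | cloE _ hfbody _ _ hwbody => exact ih1 hwbody hfbody
    have hbagwf : ∀ b ∈ bag, IWF b := by
      cases hwf with
      | cloV _ _ hv _ =>
        intro b hb
        obtain ⟨i, rfl⟩ := hv b hb
        exact IWF.var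
      | cloE _ _ _ hw _ => exact hw
    rw [elim_clo', naming_clo', List.map_map, hbody]
    congr 1
    calc bag.map (TTm.naming n m ∘ ITm.elim n m)
        = bag.map id := List.map_congr_left
            (fun a ha => ih2 a ha (hbagwf a ha) (hbagfb a ha))
      _ = bag := List.map_id bag

end CC
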